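/- For every pair of integers n, j with n ≥ 3 and 1 ≤ j ≤ n−2, one has 1/(2n²) ≤ e^{−2·μ5(n,j)}·(1 + e^{2·μ5(n,j)}·D5(n,j)) ≤ 2. -/
import Mathlib

noncomputable def mu5 (n j : ℕ) : ℝ :=
  ((n - j).choose 2 : ℝ) * (Nat.choose n 3 : ℝ) / ((Nat.choose n 2).choose 2 : ℝ)

noncomputable def d5 (n j : ℕ) : ℝ :=
  let N : ℝ := (Nat.choose n 2 : ℝ)
  let m : ℝ := ((n - j : ℕ) : ℝ)
  let CN2 : ℝ := ((Nat.choose n 2).choose 2 : ℝ)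
  let P : ℝ := 2 * (Nat.choose n 3 : ℝ) / CN2
  let Q : ℝ := (13 - 12 * m + 3 * m ^ 2) / CN2
  let R : ℝ := 8 * (Nat.choose n 3 : ℝ) / CN2
  let S : ℝ := 6 * (Nat.choose n 4 : ℝ) / ((Nat.choose n 3 : ℝ) * (N - 2))
  let T : ℝ := (5 * (n : ℝ) - 11) / (4 * (N - 2))
  P + Q + (1 - Q) * (m - 2) * (R + S + T)

noncomputable def D5 (n j : ℕ) : ℝ :=
  min (d5 n j) (min (2 * mu5 n j * d5 n j) 1)

private lemma aux1_stmt10 (x m : ℝ) (hx : 3 ≤ x) (hm2 : 2 ≤ m) (hmn : m ≤ x - 1) :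
    13 - 12*m + 3*m^2 ≤ x*(x-1)/2 * (x*(x-1)/2 - 1)/2 := by
  have h1 : 13 - 12*m + 3*m^2 ≤ 3*x^2 - 18*x + 28 := by
    nlinarith [mul_nonneg (by linarith : (0:ℝ) ≤ x - 1 - m) (by linarith : (0:ℝ) ≤ m + x - 5)]
  have h2 : 3*x^2 - 18*x + 28 ≤ x*(x-1)/2 * (x*(x-1)/2 - 1)/2 := by
    nlinarith [sq_nonneg (x-3), mul_nonneg (sq_nonneg (x-3)) (by linarith : (0:ℝ) ≤ x - 3),
      sq_nonneg ((x-3)^2), mul_nonneg (mul_nonneg (sq_nonneg (x-3)) (by linarith : (0:ℝ) ≤ x-3)) (by linarith : (0:ℝ) ≤ x)]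
  linarith

private lemma aux2_stmt10 (x : ℝ) (hx : 3 ≤ x) :
    1 * (x*(x-1)/2 * (x*(x-1)/2 - 1)/2) ≤ 2 * (x*(x-1)*(x-2)/6) * (2*x^2) := by
  nlinarith [mul_nonneg (mul_nonneg (by linarith : (0:ℝ) ≤ x-3) (by linarith : (0:ℝ) ≤ x-1)) (by linarith : (0:ℝ) ≤ x-2), sq_nonneg x, mul_nonneg (mul_nonneg (by linarith : (0:ℝ) ≤ x) (by linarith : (0:ℝ) ≤ x-1)) (by linarith : (0:ℝ) ≤ x-2)]

set_option maxHeartbeats 1600000 in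
theorem stmt_10 (n j : ℕ) (hn : 3 ≤ n) (hj1 : 1 ≤ j) (hj2 : j ≤ n - 2) :
    1 / (2 * (n : ℝ) ^ 2) ≤
      Real.exp (-(2 * mu5 n j)) * (1 + Real.exp (2 * mu5 n j) * D5 n j) ∧
    Real.exp (-(2 * mu5 n j)) * (1 + Real.exp (2 * mu5 n j) * D5 n j) ≤ 2 := by
  have hd5eq : d5 n j = 2 * (Nat.choose n 3 : ℝ) / ((Nat.choose n 2).choose 2 : ℝ)
      + (13 - 12 * ((n - j : ℕ) : ℝ) + 3 * ((n - j : ℕ) : ℝ) ^ 2) / ((Nat.choose n 2).choose 2 : ℝ)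
      + (1 - (13 - 12 * ((n - j : ℕ) : ℝ) + 3 * ((n - j : ℕ) : ℝ) ^ 2) / ((Nat.choose n 2).choose 2 : ℝ))
        * (((n - j : ℕ) : ℝ) - 2)
        * (8 * (Nat.choose n 3 : ℝ) / ((Nat.choose n 2).choose 2 : ℝ)
          + 6 * (Nat.choose n 4 : ℝ) / ((Nat.choose n 3 : ℝ) * ((Nat.choose n 2 : ℝ) - 2))
          + (5 * (n : ℝ) - 11) / (4 * ((Nat.choose n 2 : ℝ) - 2))) := rfl
  have hn3 : (3:ℝ) ≤ (n:ℝ) := by exact_mod_cast hn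
  have hm2 : 2 ≤ n - j := by omega
  have hmr : (2:ℝ) ≤ ((n - j : ℕ) : ℝ) := by exact_mod_cast hm2
  have hmn' : ((n - j : ℕ) : ℝ) ≤ (n:ℝ) - 1 := by
    have h0 : ((n - j : ℕ) : ℝ) ≤ ((n - 1 : ℕ) : ℝ) := by exact_mod_cast (by omega : n - j ≤ n - 1)
    have h1 : ((n - 1 : ℕ) : ℝ) = (n:ℝ) - 1 := by
      push_cast [Nat.cast_sub (by omega : 1 ≤ n)]; ring
    linarith [h0, h1.le]
  have hN : ((Nat.choose n 2 : ℕ) : ℝ) = (n:ℝ) * ((n:ℝ) - 1) / 2 := Nat.cast_choose_two (K := ℝ) n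
  have hCN2 : (((Nat.choose n 2).choose 2 : ℕ) : ℝ)
      = ((Nat.choose n 2 : ℕ) : ℝ) * (((Nat.choose n 2 : ℕ) : ℝ) - 1) / 2 :=
    Nat.cast_choose_two (K := ℝ) _
  have hC3 : 3 * ((Nat.choose n 3 : ℕ) : ℝ) = ((Nat.choose n 2 : ℕ) : ℝ) * ((n:ℝ) - 2) := by
    have h := Nat.choose_succ_right_eq n 2
    have h' : ((Nat.choose n 3 * 3 : ℕ) : ℝ) = ((Nat.choose n 2 * (n - 2) : ℕ) : ℝ) := by
      exact_mod_cast congrArg (Nat.cast (R := ℝ)) h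
    push_cast [Nat.cast_sub (by omega : 2 ≤ n)] at h'
    linarith
  -- explicit polynomial values
  have e5 : (((Nat.choose n 2).choose 2 : ℕ) : ℝ)
      = (n:ℝ) * ((n:ℝ) - 1) / 2 * ((n:ℝ) * ((n:ℝ) - 1) / 2 - 1) / 2 := by rw [hCN2, hN]
  have e4 : ((Nat.choose n 3 : ℕ) : ℝ) = (n:ℝ) * ((n:ℝ) - 1) * ((n:ℝ) - 2) / 6 := by
    rw [hN] at hC3; linarith
  have hNge : (3:ℝ) ≤ ((Nat.choose n 2 : ℕ) : ℝ) := by rw [hN]; nlinarith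
  have hCN2pos : (0:ℝ) < (((Nat.choose n 2).choose 2 : ℕ) : ℝ) := by rw [e5]; nlinarith
  have hC3pos : (0:ℝ) < ((Nat.choose n 3 : ℕ) : ℝ) := by
    exact_mod_cast Nat.choose_pos hn
  have hNm2pos : (0:ℝ) < ((Nat.choose n 2 : ℕ) : ℝ) - 2 := by linarith
  set m : ℝ := ((n - j : ℕ) : ℝ) with hmdef
  set Nn : ℝ := ((Nat.choose n 2 : ℕ) : ℝ) with hNndef
  set C2 : ℝ := (((Nat.choose n 2).choose 2 : ℕ) : ℝ) with hC2def
  set C3 : ℝ := ((Nat.choose n 3 : ℕ) : ℝ) with hC3def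
  set C4 : ℝ := ((Nat.choose n 4 : ℕ) : ℝ) with hC4def
  have hC4nn : (0:ℝ) ≤ C4 := by positivity
  have hQ0 : (0:ℝ) ≤ (13 - 12 * m + 3 * m ^ 2) / C2 := by
    apply div_nonneg _ hCN2pos.le; nlinarith [sq_nonneg (m - 2)]
  have hQ1 : (13 - 12 * m + 3 * m ^ 2) / C2 ≤ 1 := by
    rw [div_le_one hCN2pos, e5]
    linarith [aux1_stmt10 (n:ℝ) m hn3 hmr hmn']
  have hRST : (0:ℝ) ≤ 8 * C3 / C2 + 6 * C4 / (C3 * (Nn - 2)) + (5 * (n:ℝ) - 11) / (4 * (Nn - 2)) := by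
    have h1 : (0:ℝ) ≤ 8 * C3 / C2 := by positivity
    have h2 : (0:ℝ) ≤ 6 * C4 / (C3 * (Nn - 2)) := by
      apply div_nonneg (by positivity) (by positivity)
    have h3 : (0:ℝ) ≤ (5 * (n:ℝ) - 11) / (4 * (Nn - 2)) := by
      apply div_nonneg (by linarith) (by linarith)
    linarith
  have hd5 : 2 * C3 / C2 ≤ d5 n j := by
    rw [hd5eq]
    have := mul_nonneg (mul_nonneg (by linarith : (0:ℝ) ≤ 1 - (13 - 12 * m + 3 * m ^ 2) / C2)
      (by linarith : (0:ℝ) ≤ m - 2)) hRST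
    linarith
  have hP : 1 / (2 * (n:ℝ) ^ 2) ≤ 2 * C3 / C2 := by
    rw [div_le_div_iff₀ (by positivity) hCN2pos, e5, e4]
    linarith [aux2_stmt10 (n:ℝ) hn3]
  have hd5pos : 1 / (2 * (n:ℝ) ^ 2) ≤ d5 n j := le_trans hP hd5
  have hd5nn : (0:ℝ) ≤ d5 n j := le_trans (by positivity) hd5pos
  have hmu : (0:ℝ) ≤ mu5 n j := by unfold mu5; positivity
  have hDle1 : D5 n j ≤ 1 := le_trans (min_le_right _ _) (min_le_right _ _)
  have hDnn : (0:ℝ) ≤ D5 n j := by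
    apply le_min hd5nn (le_min _ zero_le_one)
    have := mul_nonneg (by linarith : (0:ℝ) ≤ 2 * mu5 n j) hd5nn
    linarith
  have hexp1 : Real.exp (-(2 * mu5 n j)) * Real.exp (2 * mu5 n j) = 1 := by
    rw [← Real.exp_add]; simp
  have hE : Real.exp (-(2 * mu5 n j)) * (1 + Real.exp (2 * mu5 n j) * D5 n j)
      = Real.exp (-(2 * mu5 n j)) + D5 n j := by
    have h0 : Real.exp (-(2 * mu5 n j)) * (1 + Real.exp (2 * mu5 n j) * D5 n j)
        = Real.exp (-(2 * mu5 n j)) + (Real.exp (-(2 * mu5 n j)) * Real.exp (2 * mu5 n j)) * D5 n j := by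
      ring
    rw [h0, hexp1, one_mul]
  rw [hE]
  have hexple1 : Real.exp (-(2 * mu5 n j)) ≤ 1 := Real.exp_le_one_iff.2 (by linarith)
  constructor
  · rcases le_or_gt (mu5 n j) (1/2) with hmu2 | hmu2
    · have h1 : Real.exp (-1 : ℝ) ≤ Real.exp (-(2 * mu5 n j)) := Real.exp_le_exp.2 (by linarith)
      have h2 : (1:ℝ)/3 ≤ Real.exp (-1 : ℝ) := by
        have he : Real.exp 1 ≤ 3 := by
          calc Real.exp 1 ≤ 2.7182818286 := Real.exp_one_lt_d9.le
            _ ≤ 3 := by norm_num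
        have hinv : (3:ℝ)⁻¹ ≤ (Real.exp 1)⁻¹ := inv_anti₀ (Real.exp_pos 1) he
        rw [Real.exp_neg]
        calc (1:ℝ)/3 = (3:ℝ)⁻¹ := by norm_num
          _ ≤ (Real.exp 1)⁻¹ := hinv
      have h3 : 1 / (2 * (n:ℝ) ^ 2) ≤ 1/3 := by
        rw [div_le_div_iff₀ (by positivity) (by norm_num)]; nlinarith
      linarith
    · have h2mu : d5 n j ≤ 2 * mu5 n j * d5 n j := by nlinarith
      have hD : 1 / (2 * (n:ℝ) ^ 2) ≤ D5 n j := by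
        apply le_min hd5pos (le_min (by linarith) _)
        rw [div_le_one (by positivity)]; nlinarith
      linarith [Real.exp_pos (-(2 * mu5 n j))]
  · linarith
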